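/- If φ₁, φ₂, φ₃ ∈ ℂ² all lie on the three-sphere of radius √R (i.e., ‖φᵢ‖² = R for each i), then Re((φ₁*φ₂)(φ₃*φ₁)(φ₂*φ₃)) = (R/2)(|φ₁*φ₂|² + |φ₃*φ₁|² + |φ₂*φ₃|² − R²). -/

import Mathlib

open Matrix

/-- The Hopf-type map `(z,u) ↦ (2Re(z̄u), 2Im(z̄u), |z|² − |u|²)` from `ℂ²` to `ℝ³`. -/
noncomputable def hopf (φ : ℂ × ℂ) : Fin 3 → ℝ :=
  ![2 * ((starRingEnd ℂ) φ.1 * φ.2).re, 2 * ((starRingEnd ℂ) φ.1 * φ.2).im,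
    ‖φ.1‖ ^ 2 - ‖φ.2‖ ^ 2]

/-- The Hermitian inner product `φ*ψ = z̄₁z₂ + ū₁u₂` on `ℂ²`. -/
noncomputable def herm (φ ψ : ℂ × ℂ) : ℂ :=
  (starRingEnd ℂ) φ.1 * ψ.1 + (starRingEnd ℂ) φ.2 * ψ.2

/-- The squared Hermitian norm `‖φ‖² = |z|² + |u|²`. -/
noncomputable def nsq (φ : ℂ × ℂ) : ℝ :=
  ‖φ.1‖ ^ 2 + ‖φ.2‖ ^ 2

/-!
The Gram matrix `(φᵢ*φⱼ)` of three vectors in `ℂ²` is singular. Expanding its determinant,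
the two cyclic triple products `(φ₁*φ₂)(φ₃*φ₁)(φ₂*φ₃)` and its conjugate add up to
`Σ ‖φᵢ‖²|φⱼ*φₖ|² − ‖φ₁‖²‖φ₂‖²‖φ₃‖²`, which on the sphere `‖φᵢ‖² = R` is the claim.
-/

lemma herm_conj (φ ψ : ℂ × ℂ) : (starRingEnd ℂ) (herm φ ψ) = herm ψ φ := by
  simp only [herm, map_add, map_mul, Complex.conj_conj]
  ring

lemma herm_self (φ : ℂ × ℂ) : herm φ φ = nsq φ := by
  simp only [herm, nsq, ← Complex.mul_conj', Complex.ofReal_add, Complex.ofReal_pow]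
  ring

lemma herm_mul_herm_swap (φ ψ : ℂ × ℂ) : herm φ ψ * herm ψ φ = (‖herm φ ψ‖ ^ 2 : ℝ) := by
  rw [← herm_conj φ ψ, Complex.mul_conj']
  norm_cast

lemma det_herm_gram_eq_zero (v : Fin 3 → ℂ × ℂ) : (of fun i j ↦ herm (v i) (v j)).det = 0 := by
  simp only [det_fin_three, of_apply, herm]
  ring

lemma two_mul_re_herm_triple (φ₁ φ₂ φ₃ : ℂ × ℂ) :
    2 * (herm φ₁ φ₂ * herm φ₃ φ₁ * herm φ₂ φ₃).re
      = nsq φ₁ * ‖herm φ₂ φ₃‖ ^ 2 + nsq φ₂ * ‖herm φ₃ φ₁‖ ^ 2 + nsq φ₃ * ‖herm φ₁ φ₂‖ ^ 2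
        - nsq φ₁ * nsq φ₂ * nsq φ₃ := by
  have hdet := det_herm_gram_eq_zero ![φ₁, φ₂, φ₃]
  simp only [det_fin_three, of_apply, cons_val_zero, cons_val_one, cons_val_two, head_cons,
    tail_cons] at hdet
  have hconj : herm φ₂ φ₁ * herm φ₁ φ₃ * herm φ₃ φ₂
      = (starRingEnd ℂ) (herm φ₁ φ₂ * herm φ₃ φ₁ * herm φ₂ φ₃) := by
    simp only [map_mul, herm_conj]
  have hsum : herm φ₁ φ₂ * herm φ₃ φ₁ * herm φ₂ φ₃ + herm φ₂ φ₁ * herm φ₁ φ₃ * herm φ₃ φ₂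
      = herm φ₁ φ₁ * (herm φ₂ φ₃ * herm φ₃ φ₂) + herm φ₂ φ₂ * (herm φ₃ φ₁ * herm φ₁ φ₃)
        + herm φ₃ φ₃ * (herm φ₁ φ₂ * herm φ₂ φ₁) - herm φ₁ φ₁ * herm φ₂ φ₂ * herm φ₃ φ₃ := by
    linear_combination hdet
  rw [hconj, Complex.add_conj, herm_self, herm_self, herm_self, herm_mul_herm_swap φ₂ φ₃,
    herm_mul_herm_swap φ₃ φ₁, herm_mul_herm_swap φ₁ φ₂] at hsum
  exact_mod_cast hsum

theorem re_triple_product_sphere_general (R : ℝ) (φ₁ φ₂ φ₃ : ℂ × ℂ)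
    (h₁ : nsq φ₁ = R) (h₂ : nsq φ₂ = R) (h₃ : nsq φ₃ = R) :
    (herm φ₁ φ₂ * herm φ₃ φ₁ * herm φ₂ φ₃).re
      = (R / 2) * (‖herm φ₁ φ₂‖ ^ 2 + ‖herm φ₃ φ₁‖ ^ 2
          + ‖herm φ₂ φ₃‖ ^ 2 - R ^ 2) := by
  have h := two_mul_re_herm_triple φ₁ φ₂ φ₃
  rw [h₁, h₂, h₃] at h
  linear_combination h / 2

theorem re_triple_product_sphere (R : ℝ) (hR : 0 < R) (φ₁ φ₂ φ₃ : ℂ × ℂ)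
    (h₁ : nsq φ₁ = R) (h₂ : nsq φ₂ = R) (h₃ : nsq φ₃ = R) :
    (herm φ₁ φ₂ * herm φ₃ φ₁ * herm φ₂ φ₃).re
      = (R / 2) * (‖herm φ₁ φ₂‖ ^ 2 + ‖herm φ₃ φ₁‖ ^ 2
          + ‖herm φ₂ φ₃‖ ^ 2 - R ^ 2) :=
  re_triple_product_sphere_general R φ₁ φ₂ φ₃ h₁ h₂ h₃
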